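/- Conservation laws for the one-body equation r̈ = h(t) r ∧ ṙ: let h : ℝ → ℝ be continuous and let r : ℝ → ℝ³ be twice differentiable satisfying r̈(t) = h(t) ( r(t) × ṙ(t) ) for all t. Then the speed is conserved, |ṙ(t)| = |ṙ(0)| for all t, and the squared distance from the origin is exactly quadratic in time: |r(t)|² = |r(0)|² + 2 ( r(0) · ṙ(0) ) t + |ṙ(0)|² t² for all t. -/

import Mathlib

/-! Both laws hold whenever the acceleration is orthogonal to position and velocity, as
`h(t) r × ṙ` is. Then `‖ṙ‖²` has derivative `2⟪ṙ, r̈⟫ = 0`, and `‖r‖²` has second derivative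
`2(‖ṙ‖² + ⟪r, r̈⟫) = 2‖ṙ(0)‖²`, a constant, so it is a quadratic polynomial in `t`. -/

open scoped RealInnerProductSpace

noncomputable section

/-- The cross product of two vectors in `ℝ³` (`EuclideanSpace ℝ (Fin 3)`). -/
noncomputable def cross3 (u v : EuclideanSpace ℝ (Fin 3)) : EuclideanSpace ℝ (Fin 3) :=
  WithLp.toLp 2 ![u 1 * v 2 - u 2 * v 1, u 2 * v 0 - u 0 * v 2, u 0 * v 1 - u 1 * v 0]

lemma inner_cross3_self_left (u v : EuclideanSpace ℝ (Fin 3)) : ⟪u, cross3 u v⟫ = 0 := by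
  simp only [PiLp.inner_apply, RCLike.inner_apply, conj_trivial, Fin.sum_univ_three, cross3]
  change (u 1 * v 2 - u 2 * v 1) * u 0 + (u 2 * v 0 - u 0 * v 2) * u 1
      + (u 0 * v 1 - u 1 * v 0) * u 2 = 0
  ring

lemma inner_cross3_self_right (u v : EuclideanSpace ℝ (Fin 3)) : ⟪v, cross3 u v⟫ = 0 := by
  simp only [PiLp.inner_apply, RCLike.inner_apply, conj_trivial, Fin.sum_univ_three, cross3]
  change (u 1 * v 2 - u 2 * v 1) * v 0 + (u 2 * v 0 - u 0 * v 2) * v 1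
      + (u 0 * v 1 - u 1 * v 0) * v 2 = 0
  ring

lemma eq_add_mul_of_hasDerivAt_const {f : ℝ → ℝ} {c : ℝ} (hf : ∀ t, HasDerivAt f c t)
    (t : ℝ) : f t = f 0 + c * t := by
  have hg : ∀ s, HasDerivAt (fun s => f s - c * s) 0 s := fun s =>
    ((hf s).sub ((hasDerivAt_id' s).const_mul c)).congr_deriv (by ring)
  have := is_const_of_deriv_eq_zero (fun s => (hg s).differentiableAt) (fun s => (hg s).deriv) t 0
  simp only [mul_zero, sub_zero] at this
  linarith

lemma eq_quadratic_of_hasDerivAt_of_hasDerivAt_const {f f' : ℝ → ℝ} {c : ℝ}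
    (hf : ∀ t, HasDerivAt f (f' t) t) (hf' : ∀ t, HasDerivAt f' c t) (t : ℝ) :
    f t = f 0 + f' 0 * t + c / 2 * t ^ 2 := by
  have hg : ∀ s, HasDerivAt (fun s => f s - c / 2 * s ^ 2) (f' 0) s := fun s => by
    refine ((hf s).sub ((hasDerivAt_pow 2 s).const_mul (c / 2))).congr_deriv ?_
    rw [eq_add_mul_of_hasDerivAt_const hf' s]
    ring
  have := eq_add_mul_of_hasDerivAt_const hg t
  simp only [zero_pow two_ne_zero, mul_zero, sub_zero] at this
  linarith

section OrthogonalAcceleration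

variable {E : Type*} [NormedAddCommGroup E] [InnerProductSpace ℝ E]

lemma norm_eq_norm_zero_of_inner_hasDerivAt_eq_zero {v a : ℝ → E}
    (hv : ∀ t, HasDerivAt v (a t) t) (hva : ∀ t, ⟪v t, a t⟫ = 0) (t : ℝ) :
    ‖v t‖ = ‖v 0‖ := by
  have hsq := eq_add_mul_of_hasDerivAt_const (c := 0)
    (fun s => by simpa [hva s] using (hv s).norm_sq) t
  rw [zero_mul, add_zero] at hsq
  exact (sq_eq_sq₀ (norm_nonneg _) (norm_nonneg _)).1 hsq

lemma norm_sq_eq_quadratic_of_inner_hasDerivAt_eq_zero {r r' r'' : ℝ → E}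
    (hr : ∀ t, HasDerivAt r (r' t) t) (hr' : ∀ t, HasDerivAt r' (r'' t) t)
    (hrr'' : ∀ t, ⟪r t, r'' t⟫ = 0) (hr'r'' : ∀ t, ⟪r' t, r'' t⟫ = 0) (t : ℝ) :
    ‖r t‖ ^ 2 = ‖r 0‖ ^ 2 + 2 * ⟪r 0, r' 0⟫ * t + ‖r' 0‖ ^ 2 * t ^ 2 := by
  have hspeed := norm_eq_norm_zero_of_inner_hasDerivAt_eq_zero hr' hr'r''
  have hr2 : ∀ s, HasDerivAt (fun s => 2 * ⟪r s, r' s⟫) (2 * ‖r' 0‖ ^ 2) s := fun s => by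
    refine (((hr s).inner ℝ (hr' s)).const_mul 2).congr_deriv ?_
    rw [hrr'' s, real_inner_self_eq_norm_sq, hspeed s]
    ring
  rw [eq_quadratic_of_hasDerivAt_of_hasDerivAt_const (fun s => (hr s).norm_sq) hr2 t]
  ring

end OrthogonalAcceleration

theorem conservation_laws_angular_force (h : ℝ → ℝ)
    (r r' r'' : ℝ → EuclideanSpace ℝ (Fin 3))
    (hr : ∀ t, HasDerivAt r (r' t) t)
    (hr' : ∀ t, HasDerivAt r' (r'' t) t)
    (hODE : ∀ t, r'' t = h t • cross3 (r t) (r' t)) :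
    (∀ t, ‖r' t‖ = ‖r' 0‖) ∧
    (∀ t, ‖r t‖ ^ 2 = ‖r 0‖ ^ 2 + 2 * ⟪r 0, r' 0⟫ * t + ‖r' 0‖ ^ 2 * t ^ 2) := by
  have hrr'' : ∀ t, ⟪r t, r'' t⟫ = 0 := fun t => by
    rw [hODE t, real_inner_smul_right, inner_cross3_self_left, mul_zero]
  have hr'r'' : ∀ t, ⟪r' t, r'' t⟫ = 0 := fun t => by
    rw [hODE t, real_inner_smul_right, inner_cross3_self_right, mul_zero]
  exact ⟨norm_eq_norm_zero_of_inner_hasDerivAt_eq_zero hr' hr'r'',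
    norm_sq_eq_quadratic_of_inner_hasDerivAt_eq_zero hr hr' hrr'' hr'r''⟩
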